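/- arXiv:2108.07553 — 4 statements merged into one kernel-verified Lean document; each statement's English description precedes it below -/
import Mathlib

section
/- For every positive integer N, every primitive N-th root of unity ζ ∈ ℂ, all x, y ∈ ℂ and every integer m, the matrices h satisfy the multiplicative property h(x,m) · h(y,m) = h(xy,m). -/
open Finset

/-- `⟨⟨x⟩⟩_N := N⁻¹ ∑_{a=0}^{N-1} x^a`. -/
noncomputable def dab (N : ℕ) (x : ℂ) : ℂ := (N : ℂ)⁻¹ * ∑ a ∈ range N, x ^ a

/-- The `N×N` matrix `h(y,m)` with `(i,j)` entry `ζ^((j-i)m) ⟨⟨y ζ^(j-i)⟩⟩_N`. -/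
noncomputable def hMat (N : ℕ) (ζ : ℂ) (y : ℂ) (m : ℤ) : Matrix (Fin N) (Fin N) ℂ :=
  Matrix.of fun i j =>
    ζ ^ ((((j : ℕ) : ℤ) - ((i : ℕ) : ℤ)) * m) *
      dab N (y * ζ ^ (((j : ℕ) : ℤ) - ((i : ℕ) : ℤ)))

lemma zmerge {ζ : ℂ} (hζ0 : ζ ≠ 0) (p q r : ℤ) (h : p + q = r) :
    ζ ^ p * ζ ^ q = ζ ^ r := by rw [← zpow_add₀ hζ0, h]

lemma zppow {ζ : ℂ} (c : ℤ) (a : ℕ) : (ζ ^ c) ^ a = ζ ^ (c * (a : ℤ)) := by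
  rw [← zpow_natCast (ζ ^ c), ← zpow_mul]

lemma key_sum (N : ℕ) (hN : 0 < N) (ζ : ℂ) (hζ : IsPrimitiveRoot ζ N)
    (a b : ℕ) (ha : a < N) (hb : b < N) :
    ∑ k ∈ range N, (ζ ^ ((a : ℤ) - (b : ℤ))) ^ k = if a = b then (N : ℂ) else 0 := by
  rcases eq_or_ne a b with h | h
  · simp [h]
  · rw [if_neg h]
    have hw : ζ ^ ((a : ℤ) - (b : ℤ)) ≠ 1 := by
      intro hc
      rw [hζ.zpow_eq_one_iff_dvd] at hc
      have h0 : (a : ℤ) - b ≠ 0 := by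
        simpa [sub_eq_zero] using fun hh => h (by exact_mod_cast hh)
      have h1 : (N : ℤ) ≤ |(a : ℤ) - b| :=
        Int.le_of_dvd (abs_pos.mpr h0) ((dvd_abs _ _).mpr hc)
      have h2 : |(a : ℤ) - b| < N := by rw [abs_lt]; omega
      omega
    rw [geom_sum_eq hw]
    have hpow : (ζ ^ ((a : ℤ) - (b : ℤ))) ^ N = 1 := by
      rw [← zpow_natCast, ← zpow_mul, mul_comm, zpow_mul, zpow_natCast, hζ.pow_eq_one, one_zpow]
    simp [hpow]


/-- Multiplicative property `h(x,m) h(y,m) = h(xy,m)`. -/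
theorem h_mul (N : ℕ) (hN : 0 < N) (ζ : ℂ) (hζ : IsPrimitiveRoot ζ N)
    (x y : ℂ) (m : ℤ) :
    hMat N ζ x m * hMat N ζ y m = hMat N ζ (x * y) m := by
  have hζ0 : ζ ≠ 0 := hζ.ne_zero hN.ne'
  have hNC : (N : ℂ) ≠ 0 := Nat.cast_ne_zero.mpr hN.ne'
  ext i j
  set I : ℤ := ((i : ℕ) : ℤ) with hI
  set J : ℤ := ((j : ℕ) : ℤ) with hJ
  simp only [Matrix.mul_apply, hMat, Matrix.of_apply, dab]
  rw [Fin.sum_univ_eq_sum_range (fun k : ℕ =>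
    ζ ^ (((k : ℤ) - I) * m) * ((N : ℂ)⁻¹ * ∑ a ∈ range N, (x * ζ ^ ((k : ℤ) - I)) ^ a) *
      (ζ ^ ((J - (k : ℤ)) * m) * ((N : ℂ)⁻¹ * ∑ b ∈ range N, (y * ζ ^ (J - (k : ℤ))) ^ b))) N]
  calc
    ∑ k ∈ range N,
        ζ ^ (((k : ℤ) - I) * m) * ((N : ℂ)⁻¹ * ∑ a ∈ range N, (x * ζ ^ ((k : ℤ) - I)) ^ a) *
          (ζ ^ ((J - (k : ℤ)) * m) * ((N : ℂ)⁻¹ * ∑ b ∈ range N, (y * ζ ^ (J - (k : ℤ))) ^ b))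
      = ∑ k ∈ range N, ζ ^ ((J - I) * m) * ((N : ℂ)⁻¹ * (N : ℂ)⁻¹) *
          ∑ a ∈ range N, ∑ b ∈ range N,
            (x ^ a * y ^ b * ζ ^ (J * (b : ℤ) - I * (a : ℤ))) * (ζ ^ ((a : ℤ) - (b : ℤ))) ^ k := by
        refine sum_congr rfl fun k hk => ?_
        have e1 : ζ ^ (((k : ℤ) - I) * m) * ζ ^ ((J - (k : ℤ)) * m) = ζ ^ ((J - I) * m) :=
          zmerge hζ0 _ _ _ (by ring)
        have e2 : (∑ a ∈ range N, (x * ζ ^ ((k : ℤ) - I)) ^ a) *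
            (∑ b ∈ range N, (y * ζ ^ (J - (k : ℤ))) ^ b)
            = ∑ a ∈ range N, ∑ b ∈ range N,
                (x ^ a * y ^ b * ζ ^ (J * (b : ℤ) - I * (a : ℤ))) * (ζ ^ ((a : ℤ) - (b : ℤ))) ^ k := by
          rw [Finset.sum_mul_sum]
          refine sum_congr rfl fun a ha => sum_congr rfl fun b hb => ?_
          rw [mul_pow, mul_pow, zppow, zppow, zppow]
          have e3 : ζ ^ (((k : ℤ) - I) * (a : ℤ)) * ζ ^ ((J - (k : ℤ)) * (b : ℤ))
              = ζ ^ (J * (b : ℤ) - I * (a : ℤ)) * ζ ^ (((a : ℤ) - (b : ℤ)) * (k : ℤ)) := by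
            rw [← zpow_add₀ hζ0, ← zpow_add₀ hζ0]; congr 1; ring
          calc x ^ a * ζ ^ (((k : ℤ) - I) * (a : ℤ)) * (y ^ b * ζ ^ ((J - (k : ℤ)) * (b : ℤ)))
              = x ^ a * y ^ b * (ζ ^ (((k : ℤ) - I) * (a : ℤ)) * ζ ^ ((J - (k : ℤ)) * (b : ℤ))) := by
                ring
            _ = x ^ a * y ^ b * (ζ ^ (J * (b : ℤ) - I * (a : ℤ)) * ζ ^ (((a : ℤ) - (b : ℤ)) * (k : ℤ))) := by
                rw [e3]
            _ = x ^ a * y ^ b * ζ ^ (J * (b : ℤ) - I * (a : ℤ)) * ζ ^ (((a : ℤ) - (b : ℤ)) * (k : ℤ)) := by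
                ring
        calc ζ ^ (((k : ℤ) - I) * m) * ((N : ℂ)⁻¹ * ∑ a ∈ range N, (x * ζ ^ ((k : ℤ) - I)) ^ a) *
              (ζ ^ ((J - (k : ℤ)) * m) * ((N : ℂ)⁻¹ * ∑ b ∈ range N, (y * ζ ^ (J - (k : ℤ))) ^ b))
            = (ζ ^ (((k : ℤ) - I) * m) * ζ ^ ((J - (k : ℤ)) * m)) * ((N : ℂ)⁻¹ * (N : ℂ)⁻¹) *
                ((∑ a ∈ range N, (x * ζ ^ ((k : ℤ) - I)) ^ a) *
                  (∑ b ∈ range N, (y * ζ ^ (J - (k : ℤ))) ^ b)) := by ring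
          _ = _ := by rw [e1, e2]
    _ = ζ ^ ((J - I) * m) * ((N : ℂ)⁻¹ * (N : ℂ)⁻¹) *
          ∑ k ∈ range N, ∑ a ∈ range N, ∑ b ∈ range N,
            (x ^ a * y ^ b * ζ ^ (J * (b : ℤ) - I * (a : ℤ))) * (ζ ^ ((a : ℤ) - (b : ℤ))) ^ k := by
        rw [← Finset.mul_sum]
    _ = ζ ^ ((J - I) * m) * ((N : ℂ)⁻¹ * (N : ℂ)⁻¹) *
          ∑ a ∈ range N, ∑ b ∈ range N,
            (x ^ a * y ^ b * ζ ^ (J * (b : ℤ) - I * (a : ℤ))) * (if a = b then (N : ℂ) else 0) := by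
        congr 1
        rw [Finset.sum_comm]
        refine sum_congr rfl fun a ha => ?_
        rw [Finset.sum_comm]
        refine sum_congr rfl fun b hb => ?_
        rw [← Finset.mul_sum, key_sum N hN ζ hζ a b (mem_range.mp ha) (mem_range.mp hb)]
    _ = ζ ^ ((J - I) * m) * ((N : ℂ)⁻¹ * (N : ℂ)⁻¹) *
          ∑ a ∈ range N, (x ^ a * y ^ a * ζ ^ (J * (a : ℤ) - I * (a : ℤ))) * (N : ℂ) := by
        congr 1
        refine sum_congr rfl fun a ha => ?_
        simp only [mul_ite, mul_zero]
        rw [Finset.sum_ite_eq (range N) a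
          (fun b => x ^ a * y ^ b * ζ ^ (J * (b : ℤ) - I * (a : ℤ)) * (N : ℂ)), if_pos ha]
    _ = ζ ^ ((J - I) * m) * ((N : ℂ)⁻¹ * ∑ a ∈ range N, (x * y * ζ ^ (J - I)) ^ a) := by
        have e4 : ∀ a ∈ range N, (x * y * ζ ^ (J - I)) ^ a
            = x ^ a * y ^ a * ζ ^ (J * (a : ℤ) - I * (a : ℤ)) := by
          intro a ha
          rw [mul_pow, mul_pow, zppow]
          congr 1
          ring
        rw [Finset.sum_congr rfl e4, ← Finset.sum_mul]
        field_simp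
end

section
/- Let N be a positive integer and ζ ∈ ℂ a primitive N-th root of unity, with complex conjugate ζ̄ (equivalently ζ^{-1}). Then for every integer k with 0 ≤ k ≤ N−1, one has (ζ)_k · (ζ̄)_{N−1−k} = N. -/
open Finset

/-- `(x)_n := ∏_{j=1}^{n}(1 − x^j)`. -/
noncomputable def poch (x : ℂ) (n : ℕ) : ℂ := ∏ j ∈ range n, (1 - x ^ (j + 1))

lemma nthRootsFinset_eq_image (N : ℕ) (hN : 0 < N) (ζ : ℂ) (hζ : IsPrimitiveRoot ζ N) :
    Polynomial.nthRootsFinset N (1 : ℂ) = (range N).image (ζ ^ ·) := by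
  symm
  apply Finset.eq_of_subset_of_card_le
  · intro x hx
    simp only [Finset.mem_image, Finset.mem_range] at hx
    obtain ⟨j, _, rfl⟩ := hx
    rw [Polynomial.mem_nthRootsFinset hN (1 : ℂ), ← pow_mul, mul_comm, pow_mul, hζ.pow_eq_one, one_pow]
  · rw [hζ.card_nthRootsFinset, Finset.card_image_of_injOn hζ.injOn_pow, Finset.card_range]

lemma prod_X_sub_pow (N : ℕ) (hN : 0 < N) (ζ : ℂ) (hζ : IsPrimitiveRoot ζ N) :
    ∏ j ∈ range N, (Polynomial.X - Polynomial.C (ζ ^ j)) = Polynomial.X ^ N - 1 := by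
  rw [Polynomial.X_pow_sub_one_eq_prod hN hζ, nthRootsFinset_eq_image N hN ζ hζ,
    Finset.prod_image]
  intro i hi j hj e
  exact hζ.injOn_pow (by simpa using hi) (by simpa using hj) e

lemma prod_one_sub_pow (N : ℕ) (hN : 0 < N) (ζ : ℂ) (hζ : IsPrimitiveRoot ζ N) :
    ∏ j ∈ range (N - 1), (1 - ζ ^ (j + 1)) = (N : ℂ) := by
  have key : (Polynomial.X - 1) * ∏ j ∈ range (N - 1),
      (Polynomial.X - Polynomial.C (ζ ^ (j + 1))) = Polynomial.X ^ N - 1 := by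
    rw [← prod_X_sub_pow N hN ζ hζ]
    have : N = (N - 1) + 1 := (Nat.succ_pred_eq_of_pos hN).symm
    rw [this, Finset.prod_range_succ']
    simp [mul_comm]
  have key2 : (Polynomial.X - 1) * ∏ j ∈ range (N - 1),
      (Polynomial.X - Polynomial.C (ζ ^ (j + 1)))
      = (Polynomial.X - 1) * ∑ i ∈ range N, Polynomial.X ^ i := by
    rw [key, mul_comm, geom_sum_mul]
  have hX1 : (Polynomial.X - 1 : Polynomial ℂ) ≠ 0 := Polynomial.X_sub_C_ne_zero 1
  have key3 := mul_left_cancel₀ hX1 key2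
  have := congrArg (Polynomial.eval 1) key3
  simpa [Polynomial.eval_prod] using this

/-- `(ζ)_k (ζ̄)_{N−1−k} = N` for `0 ≤ k ≤ N−1`. -/
theorem poch_mul_conj_poch (N : ℕ) (hN : 0 < N) (ζ : ℂ) (hζ : IsPrimitiveRoot ζ N)
    (k : ℕ) (hk : k ≤ N - 1) :
    poch ζ k * poch ((starRingEnd ℂ) ζ) (N - 1 - k) = (N : ℂ) := by
  have hnorm : ‖ζ‖ = 1 := Complex.norm_eq_one_of_pow_eq_one hζ.pow_eq_one hN.ne'
  have hconj : (starRingEnd ℂ) ζ = ζ⁻¹ := (Complex.inv_eq_conj hnorm).symm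
  have hζne : ζ ≠ 0 := by
    intro h; rw [h] at hnorm; simp at hnorm
  have hconjpow : ∀ j : ℕ, j + 1 ≤ N → ((starRingEnd ℂ) ζ) ^ (j + 1) = ζ ^ (N - (j + 1)) := by
    intro j hj
    rw [hconj, inv_pow, eq_comm]
    apply eq_inv_of_mul_eq_one_left
    rw [← pow_add, Nat.sub_add_cancel hj, hζ.pow_eq_one]
  set m := N - 1 with hm
  have hmN : m + 1 = N := Nat.succ_pred_eq_of_pos hN
  have step1 : poch ((starRingEnd ℂ) ζ) (m - k) = ∏ j ∈ range (m - k), (1 - ζ ^ (m - j)) := by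
    unfold poch
    apply Finset.prod_congr rfl
    intro j hj
    rw [Finset.mem_range] at hj
    rw [hconjpow j (by omega)]
    congr 2
    omega
  have step2 : ∏ j ∈ range (m - k), (1 - ζ ^ (m - j))
      = ∏ j ∈ range (m - k), (1 - ζ ^ (k + j + 1)) := by
    rw [← Finset.prod_range_reflect (fun j => 1 - ζ ^ (k + j + 1)) (m - k)]
    apply Finset.prod_congr rfl
    intro j hj
    rw [Finset.mem_range] at hj
    congr 2
    omega
  rw [step1, step2]
  unfold poch
  have hsplit : m = k + (m - k) := by omega
  rw [show (∏ j ∈ range k, (1 - ζ ^ (j + 1))) * ∏ j ∈ range (m - k), (1 - ζ ^ (k + j + 1))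
      = ∏ j ∈ range m, (1 - ζ ^ (j + 1)) by
    conv_rhs => rw [hsplit]
    rw [Finset.prod_range_add]]
  exact prod_one_sub_pow N hN ζ hζ
end

section
/- For all integers m and n ≥ 1, the descendant colored Jones polynomials of the trefoil knot 3_1, defined in ℚ(q) by DJ_n^{(m)} := ∑_{k=0}^{n−1} c_{n,k}(q) · (−1)^k q^{k(k+3)/2} · q^{km}, satisfy the inhomogeneous linear q-difference equation −q^{m+3} DJ_n^{(m+2)} + (q^{n} + q^{−n}) q^{m+2} DJ_n^{(m+1)} + (1 − q^{m+1}) DJ_n^{(m)} = 1. -/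
open Finset

/-- The variable `q` of the field `ℚ(q)` of rational functions. -/
noncomputable def q : RatFunc ℚ := RatFunc.X

/-- The cyclotomic kernel `c_{n,k}(q) := q^{−kn} (q^{n+1};q)_k (q^{n−1};q^{−1})_k`. -/
noncomputable def c (n : ℤ) (k : ℕ) : RatFunc ℚ :=
  q ^ (-(k : ℤ) * n) * (∏ t ∈ range k, (1 - q ^ (n + 1) * q ^ (t : ℤ))) *
    ∏ t ∈ range k, (1 - q ^ (n - 1) * q ^ (-(t : ℤ)))

/-- The descendant colored Jones polynomials of the trefoil `3₁`, with Habiro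
polynomials `H_k = (−1)^k q^{k(k+3)/2}`. -/
noncomputable def DJ31 (n : ℤ) (m : ℤ) : RatFunc ℚ :=
  ∑ k ∈ range n.toNat, c n k * ((-1) ^ k * q ^ ((k : ℤ) * ((k : ℤ) + 3) / 2)) * q ^ ((k : ℤ) * m)

lemma hq0 : q ≠ 0 := RatFunc.X_ne_zero

lemma csucc (n : ℤ) (k : ℕ) :
    c n (k + 1) = c n k * (q ^ (-n) * (1 - q ^ (n + 1) * q ^ (k : ℤ)) *
      (1 - q ^ (n - 1) * q ^ (-(k : ℤ)))) := by
  unfold c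
  rw [prod_range_succ, prod_range_succ]
  push_cast
  rw [show (-((k : ℤ) + 1) * n) = (-(k : ℤ) * n) + (-n) by ring, zpow_add₀ hq0]
  ring

lemma Esucc (k : ℕ) :
    ((k : ℤ) + 1) * (((k : ℤ) + 1) + 3) / 2 = (k : ℤ) * ((k : ℤ) + 3) / 2 + ((k : ℤ) + 2) := by
  obtain ⟨c, hc⟩ : Even ((k : ℤ) * ((k : ℤ) + 3)) := by
    rcases Int.even_or_odd (k : ℤ) with h | h
    · exact h.mul_right _
    · exact ((by simpa using h.add_odd ⟨1, by ring⟩ : Even ((k : ℤ) + 3))).mul_left _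
  have h1 : (k : ℤ) * ((k : ℤ) + 3) = 2 * c := by omega
  have h2 : ((k : ℤ) + 1) * (((k : ℤ) + 1) + 3) = 2 * (c + (k : ℤ) + 2) := by
    nlinarith [h1]
  rw [h1, h2]
  omega

lemma term_eq (m n : ℤ) (k : ℕ) :
    -q ^ (m + 3) * (c n k * ((-1) ^ k * q ^ ((k : ℤ) * ((k : ℤ) + 3) / 2)) * q ^ ((k : ℤ) * (m + 2)))
      + (q ^ n + q ^ (-n)) * q ^ (m + 2) *
        (c n k * ((-1) ^ k * q ^ ((k : ℤ) * ((k : ℤ) + 3) / 2)) * q ^ ((k : ℤ) * (m + 1)))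
      + (1 - q ^ (m + 1)) *
        (c n k * ((-1) ^ k * q ^ ((k : ℤ) * ((k : ℤ) + 3) / 2)) * q ^ ((k : ℤ) * m))
    = c n k * ((-1) ^ k * q ^ ((k : ℤ) * ((k : ℤ) + 3) / 2)) * q ^ ((k : ℤ) * m)
      - c n (k + 1) * ((-1) ^ (k + 1) *
          q ^ (((k : ℤ) + 1) * (((k : ℤ) + 1) + 3) / 2)) * q ^ (((k : ℤ) + 1) * m) := by
  rw [csucc, Esucc, pow_succ]
  rw [show ((k : ℤ) + 1) * m = (k : ℤ) * m + m by ring,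
      show (k : ℤ) * (m + 2) = (k : ℤ) * m + ((k : ℤ) + (k : ℤ)) by ring,
      show (k : ℤ) * (m + 1) = (k : ℤ) * m + (k : ℤ) by ring,
      show (m + 3 : ℤ) = m + (3 : ℤ) by ring]
  simp only [zpow_add₀ hq0, zpow_sub₀ hq0, zpow_neg, zpow_one, zpow_two,
    zpow_ofNat, zpow_natCast, inv_pow]
  have hA : q ^ n ≠ 0 := zpow_ne_zero _ hq0
  have hX : (q : RatFunc ℚ) ^ k ≠ 0 := pow_ne_zero _ hq0
  have h1 : (q ^ n)⁻¹ * q ^ n = 1 := inv_mul_cancel₀ (zpow_ne_zero _ hq0)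
  have h2 : (q ^ k)⁻¹ * q ^ k = 1 := inv_mul_cancel₀ (pow_ne_zero _ hq0)
  have h3 : (q : RatFunc ℚ)⁻¹ * q = 1 := inv_mul_cancel₀ hq0
  set S : RatFunc ℚ :=
    c n k * ((-1) ^ k * q ^ ((k : ℤ) * ((k : ℤ) + 3) / 2)) * q ^ ((k : ℤ) * m) with hS
  linear_combination
    (S * q ^ m * (q ^ 3 * (q ^ k) ^ 2 + q ^ 2 * q ^ k * q⁻¹ * (q ^ k)⁻¹
      - q ^ n * q ^ 3 * (q ^ k) ^ 2 * q⁻¹ * (q ^ k)⁻¹)) * h1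
    + (S * q ^ m * (q - q ^ n * q ^ 2 * q ^ k)) * h2
    + (S * q ^ m * (q * q ^ k * (q ^ k)⁻¹ - q ^ n * q ^ 2 * (q ^ k) ^ 2 * (q ^ k)⁻¹)) * h3

/-- The inhomogeneous linear `q`-difference equation for the descendants of the trefoil. -/
theorem trefoil_descendant_recursion (m n : ℤ) (hn : 1 ≤ n) :
    -q ^ (m + 3) * DJ31 n (m + 2) + (q ^ n + q ^ (-n)) * q ^ (m + 2) * DJ31 n (m + 1) +
        (1 - q ^ (m + 1)) * DJ31 n m = 1 := by
  set f : ℕ → RatFunc ℚ := fun k =>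
    c n k * ((-1) ^ k * q ^ ((k : ℤ) * ((k : ℤ) + 3) / 2)) * q ^ ((k : ℤ) * m) with hf
  have key : -q ^ (m + 3) * DJ31 n (m + 2) + (q ^ n + q ^ (-n)) * q ^ (m + 2) * DJ31 n (m + 1) +
      (1 - q ^ (m + 1)) * DJ31 n m = ∑ k ∈ range n.toNat, (f k - f (k + 1)) := by
    unfold DJ31
    rw [mul_sum, mul_sum, mul_sum, ← sum_add_distrib, ← sum_add_distrib]
    refine sum_congr rfl fun k _ => ?_
    have := term_eq m n k
    simp only [hf]
    push_cast
    linear_combination this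
  rw [key, sum_range_sub' f]
  have hf0 : f 0 = 1 := by
    simp [hf, c]
  have hfn : f n.toNat = 0 := by
    have h1 : 1 ≤ n.toNat := by omega
    have hz : c n n.toNat = 0 := by
      unfold c
      have hmem : n.toNat - 1 ∈ range n.toNat := by
        simp; omega
      have : (1 - q ^ (n - 1) * q ^ (-((n.toNat - 1 : ℕ) : ℤ))) = 0 := by
        rw [← zpow_add₀ hq0]
        have : n - 1 + -((n.toNat - 1 : ℕ) : ℤ) = 0 := by omega
        rw [this, zpow_zero]; ring
      have h2 : (∏ t ∈ range n.toNat, (1 - q ^ (n - 1) * q ^ (-(t : ℤ)))) = 0 :=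
        prod_eq_zero hmem this
      rw [h2, mul_zero]
    simp [hf, hz]
  rw [hf0, hfn, sub_zero]
end

section
/- The Habiro polynomials of the 5_2 knot, H_k^{5_2}(q) := (−1)^k q^{k(k+3)/2} ∑_{s=0}^{k} q^{s(s+1)} [k choose s]_q ∈ ℚ(q), satisfy the linear q-difference equation H_{k+2}^{5_2}(q) + q^{3+k}(1 + q − q^{2+k} + q^{4+2k}) H_{k+1}^{5_2}(q) − q^{6+2k}(−1 + q^{1+k}) H_k^{5_2}(q) = 0 for every integer k ≥ 0. -/
open Finset

/-- `(q;q)_k := ∏_{t=1}^{k}(1 − q^t)`. -/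
noncomputable def qq (k : ℕ) : RatFunc ℚ := ∏ t ∈ range k, (1 - q ^ (t + 1))

/-- The Gaussian `q`-binomial coefficient `[k choose s]_q`. -/
noncomputable def qbinom (k s : ℕ) : RatFunc ℚ := qq k / (qq s * qq (k - s))

/-- The Habiro polynomials of the `5₂` knot:
`H_k = (−1)^k q^{k(k+3)/2} ∑_{s=0}^{k} q^{s(s+1)} [k choose s]_q`. -/
noncomputable def H52 (k : ℕ) : RatFunc ℚ :=
  (-1) ^ k * q ^ ((k : ℤ) * ((k : ℤ) + 3) / 2) *
    ∑ s ∈ range (k + 1), q ^ ((s : ℤ) * ((s : ℤ) + 1)) * qbinom k s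

lemma one_sub_q_pow_ne (n : ℕ) : (1 : RatFunc ℚ) - q ^ (n + 1) ≠ 0 := by
  intro h
  have h1 : (algebraMap (Polynomial ℚ) (RatFunc ℚ)) (Polynomial.X ^ (n+1)) =
      (algebraMap (Polynomial ℚ) (RatFunc ℚ)) 1 := by
    rw [map_pow, map_one, RatFunc.algebraMap_X]
    have : (q : RatFunc ℚ) ^ (n+1) = 1 := (sub_eq_zero.mp h).symm
    simpa [q] using this
  have h2 := RatFunc.algebraMap_injective ℚ h1
  have := congrArg Polynomial.natDegree h2
  simp [Polynomial.natDegree_X_pow] at this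

lemma qq_ne_zero (k : ℕ) : qq k ≠ 0 := by
  unfold qq
  exact Finset.prod_ne_zero_iff.mpr fun t _ => one_sub_q_pow_ne t

lemma qq_succ (k : ℕ) : qq (k + 1) = qq k * (1 - q ^ (k + 1)) := Finset.prod_range_succ _ _

lemma qq_zero : qq 0 = 1 := rfl

lemma qbinom_sub (a b : ℕ) : qbinom (a + b) a = qq (a + b) / (qq a * qq b) := by
  unfold qbinom; rw [Nat.add_sub_cancel_left]

lemma qbinom_zero (n : ℕ) : qbinom n 0 = 1 := by
  have := qbinom_sub 0 n
  simpa [qq_zero, div_self (qq_ne_zero n)] using this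

lemma qbinom_self (n : ℕ) : qbinom n n = 1 := by
  have := qbinom_sub n 0
  simpa [qq_zero, div_self (qq_ne_zero n)] using this

lemma pascal1 (u d : ℕ) : qbinom (u + d + 2) (u + 1) =
    qbinom (u + d + 1) (u + 1) + q ^ (d + 1) * qbinom (u + d + 1) u := by
  have e1 : qbinom (u + d + 2) (u + 1) = qq (u + d + 2) / (qq (u+1) * qq (d+1)) := by
    have := qbinom_sub (u+1) (d+1); rw [show u + 1 + (d+1) = u + d + 2 by ring] at this; exact this
  have e2 : qbinom (u + d + 1) (u + 1) = qq (u + d + 1) / (qq (u+1) * qq d) := by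
    have := qbinom_sub (u+1) d; rw [show u + 1 + d = u + d + 1 by ring] at this; exact this
  have e3 : qbinom (u + d + 1) u = qq (u + d + 1) / (qq u * qq (d+1)) := by
    have := qbinom_sub u (d+1); rw [show u + (d+1) = u + d + 1 by ring] at this; exact this
  rw [e1, e2, e3, qq_succ (u+d+1), qq_succ u, qq_succ d]
  have h1 := qq_ne_zero u
  have h2 := qq_ne_zero d
  have h3 := one_sub_q_pow_ne u
  have h4 := one_sub_q_pow_ne d
  have h5 := one_sub_q_pow_ne (u + d + 1)
  field_simp
  ring

lemma cont (u d : ℕ) : (1 - q ^ (u + 1)) * qbinom (u + d + 1) (u + 1) =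
    (1 - q ^ (d + 1)) * qbinom (u + d + 1) u := by
  have e2 : qbinom (u + d + 1) (u + 1) = qq (u + d + 1) / (qq (u+1) * qq d) := by
    have := qbinom_sub (u+1) d; rw [show u + 1 + d = u + d + 1 by ring] at this; exact this
  have e3 : qbinom (u + d + 1) u = qq (u + d + 1) / (qq u * qq (d+1)) := by
    have := qbinom_sub u (d+1); rw [show u + (d+1) = u + d + 1 by ring] at this; exact this
  rw [e2, e3, qq_succ u, qq_succ d]
  have h1 := qq_ne_zero u
  have h2 := qq_ne_zero d
  have h3 := one_sub_q_pow_ne u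
  have h4 := one_sub_q_pow_ne d
  field_simp

noncomputable def Ssum (k : ℕ) : RatFunc ℚ := ∑ s ∈ range (k+1), q ^ (s*(s+1)) * qbinom k s
noncomputable def Asum (k : ℕ) : RatFunc ℚ := ∑ s ∈ range (k+1), q ^ (s*(s+2)) * qbinom k s
noncomputable def Csum (k : ℕ) : RatFunc ℚ := ∑ s ∈ range (k+1), q ^ (s*(s+3)) * qbinom k s

lemma key1 {u k : ℕ} (h : u < k) :
    q ^ ((u+1)*(u+2)) * qbinom (k+1) (u+1) =
      q ^ ((u+1)*(u+2)) * qbinom k (u+1) + q ^ (k+2) * (q ^ (u*(u+2)) * qbinom k u) := by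
  obtain ⟨d, rfl⟩ := Nat.exists_eq_add_of_lt h
  linear_combination (q ^ ((u+1)*(u+2))) * pascal1 u d

lemma key2 {u k : ℕ} (h : u < k) :
    q ^ ((u+1)*(u+3)) * qbinom (k+1) (u+1) =
      q ^ ((u+1)*(u+3)) * qbinom k (u+1) + q ^ (k+3) * (q ^ (u*(u+3)) * qbinom k u) := by
  obtain ⟨d, rfl⟩ := Nat.exists_eq_add_of_lt h
  linear_combination (q ^ ((u+1)*(u+3))) * pascal1 u d

lemma key3 {u k : ℕ} (h : u < k) :
    (q ^ ((u+1)*(u+3)) - q ^ ((u+1)*(u+2))) * qbinom k (u+1) =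
      q ^ (k+2) * (q ^ (u*(u+2)) * qbinom k u) - q ^ 2 * (q ^ (u*(u+3)) * qbinom k u) := by
  obtain ⟨d, rfl⟩ := Nat.exists_eq_add_of_lt h
  linear_combination (-q ^ ((u+1)*(u+2))) * cont u d

lemma L1 (k : ℕ) : Ssum (k+1) = Ssum k + q ^ (k+2) * Asum k := by
  have e0 : Ssum (k+1) = (∑ u ∈ range (k+1), q ^ ((u+1)*(u+2)) * qbinom (k+1) (u+1)) + 1 := by
    unfold Ssum
    rw [Finset.sum_range_succ' (fun s => q ^ (s*(s+1)) * qbinom (k+1) s) (k+1)]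
    rw [qbinom_zero]
    norm_num
  have e1 : ∑ u ∈ range (k+1), q ^ ((u+1)*(u+2)) * qbinom (k+1) (u+1)
      = (∑ u ∈ range k, q ^ ((u+1)*(u+2)) * qbinom (k+1) (u+1)) + q ^ ((k+1)*(k+2)) := by
    rw [Finset.sum_range_succ, qbinom_self, mul_one]
  have e2 : ∑ u ∈ range k, q ^ ((u+1)*(u+2)) * qbinom (k+1) (u+1)
      = (∑ u ∈ range k, q ^ ((u+1)*(u+2)) * qbinom k (u+1))
        + q ^ (k+2) * ∑ u ∈ range k, q ^ (u*(u+2)) * qbinom k u := by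
    rw [Finset.mul_sum, ← Finset.sum_add_distrib]
    exact Finset.sum_congr rfl fun u hu => key1 (mem_range.mp hu)
  have e3 : Ssum k = (∑ u ∈ range k, q ^ ((u+1)*(u+2)) * qbinom k (u+1)) + 1 := by
    unfold Ssum
    rw [Finset.sum_range_succ' (fun s => q ^ (s*(s+1)) * qbinom k s) k]
    rw [qbinom_zero]
    norm_num
  have e4 : Asum k = (∑ u ∈ range k, q ^ (u*(u+2)) * qbinom k u) + q ^ (k*(k+2)) := by
    unfold Asum
    rw [Finset.sum_range_succ, qbinom_self, mul_one]
  linear_combination e0 + e1 + e2 - e3 - q ^ (k+2) * e4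

lemma L2 (k : ℕ) : Asum (k+1) = Asum k + q ^ (k+3) * Csum k := by
  have e0 : Asum (k+1) = (∑ u ∈ range (k+1), q ^ ((u+1)*(u+3)) * qbinom (k+1) (u+1)) + 1 := by
    unfold Asum
    rw [Finset.sum_range_succ' (fun s => q ^ (s*(s+2)) * qbinom (k+1) s) (k+1)]
    rw [qbinom_zero]
    norm_num
  have e1 : ∑ u ∈ range (k+1), q ^ ((u+1)*(u+3)) * qbinom (k+1) (u+1)
      = (∑ u ∈ range k, q ^ ((u+1)*(u+3)) * qbinom (k+1) (u+1)) + q ^ ((k+1)*(k+3)) := by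
    rw [Finset.sum_range_succ, qbinom_self, mul_one]
  have e2 : ∑ u ∈ range k, q ^ ((u+1)*(u+3)) * qbinom (k+1) (u+1)
      = (∑ u ∈ range k, q ^ ((u+1)*(u+3)) * qbinom k (u+1))
        + q ^ (k+3) * ∑ u ∈ range k, q ^ (u*(u+3)) * qbinom k u := by
    rw [Finset.mul_sum, ← Finset.sum_add_distrib]
    exact Finset.sum_congr rfl fun u hu => key2 (mem_range.mp hu)
  have e3 : Asum k = (∑ u ∈ range k, q ^ ((u+1)*(u+3)) * qbinom k (u+1)) + 1 := by
    unfold Asum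
    rw [Finset.sum_range_succ' (fun s => q ^ (s*(s+2)) * qbinom k s) k]
    rw [qbinom_zero]
    norm_num
  have e4 : Csum k = (∑ u ∈ range k, q ^ (u*(u+3)) * qbinom k u) + q ^ (k*(k+3)) := by
    unfold Csum
    rw [Finset.sum_range_succ, qbinom_self, mul_one]
  linear_combination e0 + e1 + e2 - e3 - q ^ (k+3) * e4

lemma L3 (k : ℕ) : Asum k - Ssum k = -(q ^ 2 * Csum k) + q ^ (k+2) * Asum k := by
  have e0 : Asum k - Ssum k
      = ∑ u ∈ range k, (q ^ ((u+1)*(u+3)) - q ^ ((u+1)*(u+2))) * qbinom k (u+1) := by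
    unfold Asum Ssum
    rw [← Finset.sum_sub_distrib]
    rw [Finset.sum_range_succ' (fun s => q ^ (s*(s+2)) * qbinom k s - q ^ (s*(s+1)) * qbinom k s) k]
    rw [show q ^ (0*(0+2)) * qbinom k 0 - q ^ (0*(0+1)) * qbinom k 0 = 0 from by simp [qbinom_zero],
      add_zero]
    exact Finset.sum_congr rfl fun u _ => by ring
  have e2 : ∑ u ∈ range k, (q ^ ((u+1)*(u+3)) - q ^ ((u+1)*(u+2))) * qbinom k (u+1)
      = q ^ (k+2) * (∑ u ∈ range k, q ^ (u*(u+2)) * qbinom k u)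
        - q ^ 2 * (∑ u ∈ range k, q ^ (u*(u+3)) * qbinom k u) := by
    rw [Finset.mul_sum, Finset.mul_sum, ← Finset.sum_sub_distrib]
    exact Finset.sum_congr rfl fun u hu => key3 (mem_range.mp hu)
  have e4 : Asum k = (∑ u ∈ range k, q ^ (u*(u+2)) * qbinom k u) + q ^ (k*(k+2)) := by
    unfold Asum
    rw [Finset.sum_range_succ, qbinom_self, mul_one]
  have e5 : Csum k = (∑ u ∈ range k, q ^ (u*(u+3)) * qbinom k u) + q ^ (k*(k+3)) := by
    unfold Csum
    rw [Finset.sum_range_succ, qbinom_self, mul_one]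
  linear_combination e0 + e2 - q ^ (k+2) * e4 + q ^ 2 * e5

lemma Srec (k : ℕ) : Ssum (k+2) = (1 + q - q ^ (k+2) + q ^ (2*k+4)) * Ssum (k+1)
    + (q ^ (k+2) - q) * Ssum k := by
  have E1' : Ssum (k+2) = Ssum (k+1) + q ^ (k+3) * Asum (k+1) := by
    have := L1 (k+1)
    rw [show k + 1 + 1 = k + 2 from rfl, show k + 1 + 2 = k + 3 from rfl] at this
    exact this
  have E2 := L2 k
  have E3 := L3 k
  have E1 := L1 k
  linear_combination E1' + q ^ (k+3) * E2 + q ^ (2*k+4) * E3 + (q ^ (k+2) - q - q ^ (2*k+4)) * E1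

lemma H52_eq (k m : ℕ) (hm : k * (k + 3) = 2 * m) :
    H52 k = (-1) ^ k * q ^ m * Ssum k := by
  unfold H52 Ssum
  have hexp : (k : ℤ) * ((k : ℤ) + 3) / 2 = (m : ℤ) := by
    have : (k : ℤ) * ((k : ℤ) + 3) = 2 * (m : ℤ) := by exact_mod_cast congrArg (Nat.cast : ℕ → ℤ) hm
    omega
  have hsum : ∑ s ∈ range (k + 1), q ^ ((s : ℤ) * ((s : ℤ) + 1)) * qbinom k s
      = ∑ s ∈ range (k + 1), q ^ (s * (s + 1)) * qbinom k s :=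
    Finset.sum_congr rfl fun s _ => by
      rw [show (s : ℤ) * ((s : ℤ) + 1) = ((s * (s + 1) : ℕ) : ℤ) by push_cast; ring, zpow_natCast]
  rw [hexp, hsum, show ((m : ℤ)) = ((m : ℕ) : ℤ) from rfl, zpow_natCast]

/-- The linear `q`-difference equation for the Habiro polynomials of `5₂`. -/
theorem H52_recursion (k : ℕ) :
    H52 (k + 2) + q ^ (3 + (k : ℤ)) * (1 + q - q ^ (2 + (k : ℤ)) + q ^ (4 + 2 * (k : ℤ))) * H52 (k + 1)
      - q ^ (6 + 2 * (k : ℤ)) * (-1 + q ^ (1 + (k : ℤ))) * H52 k = 0 := by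
  obtain ⟨m, hm⟩ : ∃ m, k * (k + 3) = 2 * m := by
    rcases Nat.even_or_odd k with ⟨t, ht⟩ | ⟨t, ht⟩
    · exact ⟨t * (k + 3), by subst ht; ring⟩
    · exact ⟨k * (t + 2), by subst ht; ring⟩
  have h0 := H52_eq k m hm
  have h1 : H52 (k + 1) = (-1) ^ (k + 1) * q ^ (m + k + 2) * Ssum (k + 1) :=
    H52_eq (k + 1) (m + k + 2) (by
      have h : (k + 1) * ((k + 1) + 3) = k * (k + 3) + 2 * k + 4 := by ring
      omega)
  have h2 : H52 (k + 2) = (-1) ^ (k + 2) * q ^ (m + 2 * k + 5) * Ssum (k + 2) :=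
    H52_eq (k + 2) (m + 2 * k + 5) (by
      have h : (k + 2) * ((k + 2) + 3) = k * (k + 3) + 4 * k + 10 := by ring
      omega)
  rw [h0, h1, h2,
    show (3 + (k : ℤ)) = ((k + 3 : ℕ) : ℤ) by push_cast; ring, zpow_natCast,
    show (2 + (k : ℤ)) = ((k + 2 : ℕ) : ℤ) by push_cast; ring, zpow_natCast,
    show (4 + 2 * (k : ℤ)) = ((2 * k + 4 : ℕ) : ℤ) by push_cast; ring, zpow_natCast,
    show (6 + 2 * (k : ℤ)) = ((2 * k + 6 : ℕ) : ℤ) by push_cast; ring, zpow_natCast,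
    show (1 + (k : ℤ)) = ((k + 1 : ℕ) : ℤ) by push_cast; ring, zpow_natCast]
  linear_combination ((-1 : RatFunc ℚ) ^ k * q ^ (m + 2 * k + 5)) * Srec k
end
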